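/- arXiv:2309.16594 — 2 statements merged into one kernel-verified Lean document; each statement's English description precedes it below -/
import Mathlib

section
/- Let G = (V,E) be a directed graph, let C, D, H ⊆ V, and let h ≥ 1 be an integer. Let Π' = (π'_{s,t}) be a family containing, for some pairs (s,t), a path π'_{s,t} from s to t in G with at most h edges (with |π'_{s,t}| := ∞ when undefined), such that: (i) for all s,t ∈ V for which every walk from s to t in G of length δ_G^h(s,t) avoids all vertices of C ∪ D (in particular whenever δ_G^h(s,t) = ∞), |π'_{s,t}| = δ_G^h(s,t); and (ii) every defined π'_{s,t} with |π'_{s,t}| = h contains a vertex of H. Then for all s ∈ V and t ∈ V ∖ (C ∪ D ∪ H) with δ_G(s,t) < ∞, there is a walk from s to t in G of length exactly δ_G(s,t) that either (a) equals π'_{s,t}, or (b) has a suffix of positive length which is either π'_{r,t} for some r ∈ C ∪ D ∪ H, or an edge (r,q) ∈ E followed by π'_{q,t} for some q ∈ V and r ∈ C ∪ D ∪ H. -/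
open scoped Classical

namespace Paper

variable {V : Type*}

/-- `p` (restricted to indices `0,…,k`) is a walk of length `k` w.r.t. the edge relation `E`. -/
def IsWalk (E : V → V → Prop) (k : ℕ) (p : ℕ → V) : Prop :=
  ∀ i, i < k → E (p i) (p (i + 1))

/-- The distance `δ_G(s,t)`. -/
noncomputable def gdist (E : V → V → Prop) (s t : V) : ℕ∞ :=
  ⨅ (k : ℕ) (_ : ∃ p : ℕ → V, p 0 = s ∧ p k = t ∧ IsWalk E k p), (k : ℕ∞)

/-- The `h`-bounded distance `δ_G^h(s,t)`. -/
noncomputable def bdist (E : V → V → Prop) (h : ℕ) (s t : V) : ℕ∞ :=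
  ⨅ (k : ℕ) (_ : k ≤ h ∧ ∃ p : ℕ → V, p 0 = s ∧ p k = t ∧ IsWalk E k p), (k : ℕ∞)

/-- A (simple) path in the graph `E`. -/
structure Path (E : V → V → Prop) where
  len : ℕ
  vtx : ℕ → V
  isWalk : IsWalk E len vtx
  inj : ∀ i ≤ len, ∀ j ≤ len, vtx i = vtx j → i = j

/-- The length of an optional path, `⊤` if undefined. -/
def plen {E : V → V → Prop} : Option (Path E) → ℕ∞
  | none => ⊤
  | some p => (p.len : ℕ∞)

/-! Strong induction on `d = δ_G(q, t)`, with `S = C ∪ D ∪ H`. If a shortest walk `q → t` meets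
`S` at some position before `t`, keep it up to the edge leaving that vertex and continue with the
walk the induction hypothesis gives for the head of that edge: this is (b). If `d ≤ h` and no
shortest walk meets `S`, then `δ^h(q,t) = d` and (i) makes `π'_{q,t}` a shortest walk: this is (a).
If `d > h`, apply the induction hypothesis to the vertex `h` steps before `t` on a shortest walk:
its walk either already ends as in (b), or it is a `π'`-path with `h` edges, which by (ii) meets
`S` before `t`, and we are in the first case. -/

def walkAppend (m : ℕ) (w u : ℕ → V) : ℕ → V := fun i => if i ≤ m then w i else u (i - m)

section Walks

variable {E : V → V → Prop}

lemma walkAppend_of_le {m i : ℕ} {w u : ℕ → V} (hi : i ≤ m) : walkAppend m w u i = w i :=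
  if_pos hi

lemma walkAppend_add {m : ℕ} {w u : ℕ → V} (hwu : w m = u 0) (i : ℕ) :
    walkAppend m w u (m + i) = u i := by
  rcases Nat.eq_zero_or_pos i with rfl | hi
  · simpa [walkAppend] using hwu
  · simp [walkAppend, show ¬m + i ≤ m by omega]

lemma IsWalk.of_le {k m : ℕ} {w : ℕ → V} (hw : IsWalk E k w) (hm : m ≤ k) : IsWalk E m w :=
  fun i hi => hw i (by omega)

lemma IsWalk.shift {k : ℕ} {w : ℕ → V} (hw : IsWalk E k w) (m : ℕ) :
    IsWalk E (k - m) (fun i => w (m + i)) :=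
  fun i hi => hw (m + i) (by omega)

lemma IsWalk.walkAppend {m n : ℕ} {w u : ℕ → V} (hw : IsWalk E m w) (hu : IsWalk E n u)
    (hwu : w m = u 0) : IsWalk E (m + n) (walkAppend m w u) := by
  intro i hi
  by_cases him : i < m
  · rw [walkAppend_of_le (by omega), walkAppend_of_le (by omega)]
    exact hw i him
  · obtain ⟨j, rfl⟩ : ∃ j, i = m + j := ⟨i - m, by omega⟩
    rw [walkAppend_add hwu, add_assoc, walkAppend_add hwu]
    exact hu j (by omega)

lemma gdist_le_of_isWalk {s t : V} {k : ℕ} {w : ℕ → V} (h0 : w 0 = s) (hk : w k = t)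
    (hw : IsWalk E k w) : gdist E s t ≤ k :=
  iInf₂_le k ⟨w, h0, hk, hw⟩

lemma bdist_le_of_isWalk {h : ℕ} {s t : V} {k : ℕ} {w : ℕ → V} (hkh : k ≤ h) (h0 : w 0 = s)
    (hk : w k = t) (hw : IsWalk E k w) : bdist E h s t ≤ k :=
  iInf₂_le k ⟨hkh, w, h0, hk, hw⟩

lemma gdist_le_bdist (h : ℕ) (s t : V) : gdist E s t ≤ bdist E h s t :=
  le_iInf₂ fun _ ⟨_, _, h0, hk, hw⟩ => gdist_le_of_isWalk h0 hk hw

lemma exists_isWalk_of_gdist_eq {s t : V} {k : ℕ} (hk : gdist E s t = k) :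
    ∃ w : ℕ → V, w 0 = s ∧ w k = t ∧ IsWalk E k w := by
  rw [gdist, iInf_subtype', ENat.iInf_eq_natCast_iff] at hk
  obtain ⟨⟨l, hl⟩, hlk⟩ := hk.1
  exact Nat.cast_injective hlk ▸ hl

lemma bdist_eq_of_gdist_eq {h : ℕ} {s t : V} {k : ℕ} (hk : gdist E s t = k) (hkh : k ≤ h) :
    bdist E h s t = k := by
  obtain ⟨w, h0, hkt, hw⟩ := exists_isWalk_of_gdist_eq hk
  exact le_antisymm (bdist_le_of_isWalk hkh h0 hkt hw) (hk ▸ gdist_le_bdist h s t)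

lemma gdist_eq_sub_of_shortest {s t : V} {k m : ℕ} {w : ℕ → V} (h0 : w 0 = s) (hk : w k = t)
    (hw : IsWalk E k w) (hmin : gdist E s t = k) (hm : m ≤ k) : gdist E (w m) t = (k - m : ℕ) := by
  refine le_antisymm (gdist_le_of_isWalk rfl (by simp [Nat.add_sub_cancel' hm, hk])
    (hw.shift m)) (le_iInf₂ fun l ⟨u, hu0, hul, hu⟩ => ?_)
  have hglued : gdist E s t ≤ (m + l : ℕ) :=
    gdist_le_of_isWalk (by rw [walkAppend_of_le (Nat.zero_le m), h0])
      (by rw [walkAppend_add hu0.symm, hul]) ((hw.of_le hm).walkAppend hu hu0.symm)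
  rw [hmin, Nat.cast_le] at hglued
  exact Nat.cast_le.mpr (by omega)

end Walks

section Decomposition

variable {E : V → V → Prop} (π' : V → V → Option (Path E)) (S : Set V) (t : V)

def HasSuffixVia (k : ℕ) (w : ℕ → V) : Prop :=
  ∃ j, j < k ∧
    ((∃ r, r ∈ S ∧ ∃ p, π' r t = some p ∧ p.len = k - j ∧ ∀ i ≤ p.len, w (j + i) = p.vtx i) ∨
     (∃ q r, r ∈ S ∧ E r q ∧ w j = r ∧
        ∃ p, π' q t = some p ∧ p.len = k - j - 1 ∧ ∀ i ≤ p.len, w (j + 1 + i) = p.vtx i))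

def IsDecomposedWalk (q : V) (k : ℕ) (w : ℕ → V) : Prop :=
  w 0 = q ∧ w k = t ∧ IsWalk E k w ∧
    ((∃ p, π' q t = some p ∧ p.len = k ∧ ∀ i ≤ k, w i = p.vtx i) ∨ HasSuffixVia π' S t k w)

def DecomposableAt (k : ℕ) : Prop :=
  ∀ q, gdist E q t = k → ∃ w, IsDecomposedWalk π' S t q k w

variable {π' S t}

lemma HasSuffixVia.walkAppend {m n : ℕ} {w u : ℕ → V} (hu : HasSuffixVia π' S t n u)
    (hwu : w m = u 0) : HasSuffixVia π' S t (m + n) (walkAppend m w u) := by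
  obtain ⟨j, hj, ⟨r, hr, p, hp, hlen, hup⟩ | ⟨q, r, hr, hE, hur, p, hp, hlen, hup⟩⟩ := hu
  · refine ⟨m + j, by omega, Or.inl ⟨r, hr, p, hp, by omega, fun i hi => ?_⟩⟩
    rw [add_assoc, walkAppend_add hwu]
    exact hup i hi
  · refine ⟨m + j, by omega, Or.inr ⟨q, r, hr, hE, by rw [walkAppend_add hwu, hur], p, hp,
      by omega, fun i hi => ?_⟩⟩
    rw [add_assoc, add_assoc, walkAppend_add hwu, ← add_assoc]
    exact hup i hi

lemma hasSuffixVia_walkAppend_edge {j n : ℕ} {w u : ℕ → V} {p : Path E} (hS : w j ∈ S)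
    (hE : E (w j) (w (j + 1))) (hp : π' (w (j + 1)) t = some p) (hlen : p.len = n)
    (hup : ∀ i ≤ n, u i = p.vtx i) (hwu : w (j + 1) = u 0) :
    HasSuffixVia π' S t (j + 1 + n) (walkAppend (j + 1) w u) :=
  ⟨j, by omega, Or.inr ⟨w (j + 1), w j, hS, hE, walkAppend_of_le (by omega), p, hp, by omega,
    fun i hi => by rw [walkAppend_add hwu]; exact hup i (by omega)⟩⟩

lemma exists_isDecomposedWalk_of_mem {q : V} {j k : ℕ} {w : ℕ → V}
    (ih : DecomposableAt π' S t (k - (j + 1))) (h0 : w 0 = q) (hk : w k = t)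
    (hw : IsWalk E k w) (hmin : gdist E q t = k) (hj : j < k) (hS : w j ∈ S) :
    ∃ w', IsDecomposedWalk π' S t q k w' := by
  obtain ⟨n, rfl⟩ : ∃ n, k = j + 1 + n := ⟨k - (j + 1), by omega⟩
  rw [Nat.add_sub_cancel_left] at ih
  obtain ⟨u, hu0, hut, hu, hdec⟩ :=
    ih (w (j + 1)) (by simpa using gdist_eq_sub_of_shortest h0 hk hw hmin (m := j + 1) (by omega))
  refine ⟨walkAppend (j + 1) w u, by rw [walkAppend_of_le (by omega), h0],
    by rw [walkAppend_add hu0.symm, hut], (hw.of_le (by omega)).walkAppend hu hu0.symm, Or.inr ?_⟩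
  rcases hdec with ⟨p, hp, hlen, hup⟩ | hsuf
  · exact hasSuffixVia_walkAppend_edge hS (hw j (by omega)) hp hlen hup hu0.symm
  · exact hsuf.walkAppend hu0.symm

lemma decomposableAt_of_le {h d : ℕ}
    (hends : ∀ q p, π' q t = some p → p.vtx 0 = q ∧ p.vtx p.len = t)
    (hexact : ∀ q, (∀ k w, w 0 = q → w k = t → IsWalk E k w → (k : ℕ∞) = bdist E h q t →
      ∀ i ≤ k, w i ∉ S) → plen (π' q t) = bdist E h q t)
    (ht : t ∉ S) (ih : ∀ n < d, DecomposableAt π' S t n) (hdh : d ≤ h) :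
    DecomposableAt π' S t d := by
  intro q hq
  have hbd := bdist_eq_of_gdist_eq hq hdh
  by_cases havoid : ∀ k w, w 0 = q → w k = t → IsWalk E k w → (k : ℕ∞) = bdist E h q t →
      ∀ i ≤ k, w i ∉ S
  · have hlen := hexact q havoid
    rw [hbd] at hlen
    cases hp : π' q t with
    | none => simp [hp, plen] at hlen
    | some p =>
      have hpd : p.len = d := by simpa [hp, plen] using hlen
      obtain ⟨hp0, hpt⟩ := hends q p hp
      exact ⟨p.vtx, hp0, hpd ▸ hpt, hpd ▸ p.isWalk, Or.inl ⟨p, hp, hpd, fun _ _ => rfl⟩⟩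
  · push Not at havoid
    obtain ⟨k, w, h0, hk, hw, hkd, i, hik, hiS⟩ := havoid
    rw [hbd, Nat.cast_inj] at hkd
    subst hkd
    have hi : i < k := lt_of_le_of_ne hik (by rintro rfl; exact ht (hk ▸ hiS))
    exact exists_isDecomposedWalk_of_mem (ih _ (by omega)) h0 hk hw hq hi hiS

lemma decomposableAt_of_lt {h d : ℕ}
    (hhit : ∀ q p, π' q t = some p → p.len = h → ∃ i ≤ p.len, p.vtx i ∈ S)
    (ht : t ∉ S) (ih : ∀ n < d, DecomposableAt π' S t n) (hhd : h < d) :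
    DecomposableAt π' S t d := by
  obtain ⟨m, rfl⟩ : ∃ m, d = m + h := ⟨d - h, by omega⟩
  intro q hq
  obtain ⟨w, h0, hk, hw⟩ := exists_isWalk_of_gdist_eq hq
  obtain ⟨u, hu0, hut, hu, hdec⟩ := ih h hhd (w m) (by
    simpa using gdist_eq_sub_of_shortest h0 hk hw hq (m := m) (by omega))
  have h0' : walkAppend m w u 0 = q := by rw [walkAppend_of_le (Nat.zero_le _), h0]
  have hk' : walkAppend m w u (m + h) = t := by rw [walkAppend_add hu0.symm, hut]
  have hw' : IsWalk E (m + h) (walkAppend m w u) := (hw.of_le (by omega)).walkAppend hu hu0.symm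
  rcases hdec with ⟨p, hp, hph, hup⟩ | hsuf
  · obtain ⟨i, hih, hiS⟩ := hhit _ p hp hph
    rw [hph] at hih
    rw [← hup i hih] at hiS
    have hi : i < h := lt_of_le_of_ne hih (by rintro rfl; exact ht (hut ▸ hiS))
    exact exists_isDecomposedWalk_of_mem (ih _ (by omega)) h0' hk' hw' hq (j := m + i)
      (by omega) (by rwa [walkAppend_add hu0.symm])
  · exact ⟨_, h0', hk', hw', Or.inr (hsuf.walkAppend hu0.symm)⟩

lemma decomposableAt {h : ℕ}
    (hends : ∀ q p, π' q t = some p → p.vtx 0 = q ∧ p.vtx p.len = t)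
    (hexact : ∀ q, (∀ k w, w 0 = q → w k = t → IsWalk E k w → (k : ℕ∞) = bdist E h q t →
      ∀ i ≤ k, w i ∉ S) → plen (π' q t) = bdist E h q t)
    (hhit : ∀ q p, π' q t = some p → p.len = h → ∃ i ≤ p.len, p.vtx i ∈ S)
    (ht : t ∉ S) (d : ℕ) : DecomposableAt π' S t d := by
  induction d using Nat.strong_induction_on with
  | _ d ih =>
    rcases le_or_gt d h with hdh | hhd
    · exact decomposableAt_of_le hends hexact ht ih hdh
    · exact decomposableAt_of_lt hhit ht ih hhd

end Decomposition

theorem suffix_decomposition_general {V : Type*} (E : V → V → Prop)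
    (C D H : Set V) (h : ℕ)
    (π' : V → V → Option (Path E))
    (hπ' : ∀ s t : V, ∀ p, π' s t = some p →
      p.vtx 0 = s ∧ p.vtx p.len = t ∧ p.len ≤ h)
    (hi : ∀ s t : V,
      (∀ (k : ℕ) (wv : ℕ → V), wv 0 = s → wv k = t → IsWalk E k wv →
        (k : ℕ∞) = bdist E h s t → ∀ i ≤ k, wv i ∉ C ∧ wv i ∉ D) →
      plen (π' s t) = bdist E h s t)
    (hii : ∀ s t : V, ∀ p, π' s t = some p → p.len = h → ∃ i ≤ p.len, p.vtx i ∈ H) :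
    ∀ s t : V, t ∉ C → t ∉ D → t ∉ H → gdist E s t ≠ ⊤ →
      ∃ (k : ℕ) (wv : ℕ → V), wv 0 = s ∧ wv k = t ∧ IsWalk E k wv ∧
        (k : ℕ∞) = gdist E s t ∧
        ((∃ p, π' s t = some p ∧ p.len = k ∧ ∀ i ≤ k, wv i = p.vtx i) ∨
         (∃ j, j < k ∧
           ((∃ r, (r ∈ C ∨ r ∈ D ∨ r ∈ H) ∧
              ∃ p, π' r t = some p ∧ p.len = k - j ∧ ∀ i ≤ p.len, wv (j + i) = p.vtx i) ∨
            (∃ qv r, (r ∈ C ∨ r ∈ D ∨ r ∈ H) ∧ E r qv ∧ wv j = r ∧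
              ∃ p, π' qv t = some p ∧ p.len = k - j - 1 ∧
                ∀ i ≤ p.len, wv (j + 1 + i) = p.vtx i)))) := by
  intro s t htC htD htH hne
  obtain ⟨k, hk⟩ := ENat.ne_top_iff_exists.mp hne
  have hends q p (hp : π' q t = some p) : p.vtx 0 = q ∧ p.vtx p.len = t :=
    ⟨(hπ' q t p hp).1, (hπ' q t p hp).2.1⟩
  have hexact q (hq : ∀ k w, w 0 = q → w k = t → IsWalk E k w → (k : ℕ∞) = bdist E h q t →
      ∀ i ≤ k, w i ∉ C ∪ (D ∪ H)) : plen (π' q t) = bdist E h q t :=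
    hi q t fun k w h0 hk hw hkb i hik =>
      have hiS := hq k w h0 hk hw hkb i hik
      ⟨fun hC => hiS (Or.inl hC), fun hD => hiS (Or.inr (Or.inl hD))⟩
  have hhit q p (hp : π' q t = some p) (hlen : p.len = h) : ∃ i ≤ p.len, p.vtx i ∈ C ∪ (D ∪ H) :=
    (hii q t p hp hlen).imp fun _ ⟨hi, hH⟩ => ⟨hi, Or.inr (Or.inr hH)⟩
  have ht : t ∉ C ∪ (D ∪ H) := by simp [htC, htD, htH]
  obtain ⟨w, h0, hkt, hw, hdec⟩ := decomposableAt hends hexact hhit ht k s hk.symm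
  exact ⟨k, w, h0, hkt, hw, hk, hdec⟩

/-- **Lemma 6.3 (shortest-path suffix decomposition).** Assume `Π'` consists of paths of `G`
with at most `h` edges such that (i) `|π'_{s,t}| = δ_G^h(s,t)` whenever every walk `s → t` in
`G` of length `δ_G^h(s,t)` avoids `C ∪ D`, and (ii) every defined `π'_{s,t}` with exactly `h`
edges contains a vertex of `H`.  Then for every `s` and every `t ∉ C ∪ D ∪ H` reachable from
`s`, some shortest walk `s → t` in `G` either (a) equals `π'_{s,t}` or (b) has a suffix of
positive length that is `π'_{r,t}` with `r ∈ C ∪ D ∪ H`, or an edge `(r,q)` with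
`r ∈ C ∪ D ∪ H` followed by `π'_{q,t}`. -/
theorem suffix_decomposition {V : Type*} (E : V → V → Prop)
    (C D H : Set V) (h : ℕ) (hh : 1 ≤ h)
    (π' : V → V → Option (Path E))
    (hπ' : ∀ s t : V, ∀ p, π' s t = some p →
      p.vtx 0 = s ∧ p.vtx p.len = t ∧ p.len ≤ h)
    (hi : ∀ s t : V,
      (∀ (k : ℕ) (wv : ℕ → V), wv 0 = s → wv k = t → IsWalk E k wv →
        (k : ℕ∞) = bdist E h s t → ∀ i ≤ k, wv i ∉ C ∧ wv i ∉ D) →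
      plen (π' s t) = bdist E h s t)
    (hii : ∀ s t : V, ∀ p, π' s t = some p → p.len = h → ∃ i ≤ p.len, p.vtx i ∈ H) :
    ∀ s t : V, t ∉ C → t ∉ D → t ∉ H → gdist E s t ≠ ⊤ →
      ∃ (k : ℕ) (wv : ℕ → V), wv 0 = s ∧ wv k = t ∧ IsWalk E k wv ∧
        (k : ℕ∞) = gdist E s t ∧
        ((∃ p, π' s t = some p ∧ p.len = k ∧ ∀ i ≤ k, wv i = p.vtx i) ∨
         (∃ j, j < k ∧
           ((∃ r, (r ∈ C ∨ r ∈ D ∨ r ∈ H) ∧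
              ∃ p, π' r t = some p ∧ p.len = k - j ∧ ∀ i ≤ p.len, wv (j + i) = p.vtx i) ∨
            (∃ qv r, (r ∈ C ∨ r ∈ D ∨ r ∈ H) ∧ E r qv ∧ wv j = r ∧
              ∃ p, π' qv t = some p ∧ p.len = k - j - 1 ∧
                ∀ i ≤ p.len, wv (j + 1 + i) = p.vtx i)))) :=
  suffix_decomposition_general E C D H h π' hπ' hi hii

end Paper
end

section
/- Let G = (V,E) be a directed graph with |V| = n ≥ 1 and let X ⊆ V. Let A be a V × V matrix with entries in ℕ ∪ {∞} satisfying: (H0) A_{u,u} = 0 for all u ∈ V, A_{u,v} = 1 for all (u,v) ∈ E with u ≠ v, and A_{u,v} ≥ δ_G(u,v) for all u,v ∈ V; (H1) for all s ∈ V ∖ X and t ∈ V with δ_G(s,t) < ∞: either A_{s,t} = δ_G(s,t), or there exist q ∈ V and r ∈ X with A_{s,q} = δ_G(s,q), δ_G(q,r) ≤ 1, δ_G(s,q) + δ_G(q,r) ≥ 1, and δ_G(s,t) = δ_G(s,q) + δ_G(q,r) + δ_G(r,t); (H2) for all s ∈ V and t ∈ V ∖ X with δ_G(s,t) < ∞: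 either A_{s,t} = δ_G(s,t), or there exist q ∈ V and r ∈ X with A_{q,t} = δ_G(q,t), δ_G(r,q) ≤ 1, δ_G(r,q) + δ_G(q,t) ≥ 1, and δ_G(s,t) = δ_G(s,r) + δ_G(r,q) + δ_G(q,t). Define A* := min( A , (A ⋆ A[V,X]) ⋆ (A[X,V] ⋆ A ⋆ A[V,X])^n ⋆ (A[X,V] ⋆ A) ), where the power is with respect to the min-plus product and min is entrywise. Then A*_{s,t} = δ_G(s,t) for all s,t ∈ V. -/
open scoped Classical

namespace Paper

variable {V : Type*}

/-- Min-plus (tropical) product of `V × V` matrices with entries in `ℕ∞`. -/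
noncomputable def mp [Fintype V] (M N : V → V → ℕ∞) : V → V → ℕ∞ :=
  fun i j => ⨅ k : V, M i k + N k j

/-- Min-plus powers (`mpPow M 0` is the min-plus identity: `0` on the diagonal, `⊤` off it). -/
noncomputable def mpPow [Fintype V] (M : V → V → ℕ∞) : ℕ → V → V → ℕ∞
  | 0 => fun i j => if i = j then 0 else ⊤
  | m + 1 => mp (mpPow M m) M

/-- The submatrix `M[X,V]` (rows `X`), represented with `⊤`-padding outside the rows `X`. -/
noncomputable def maskRow (X : Set V) (M : V → V → ℕ∞) : V → V → ℕ∞ :=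
  fun i j => if i ∈ X then M i j else ⊤

/-- The submatrix `M[V,X]` (columns `X`), represented with `⊤`-padding outside the columns `X`. -/
noncomputable def maskCol (X : Set V) (M : V → V → ℕ∞) : V → V → ℕ∞ :=
  fun i j => if j ∈ X then M i j else ⊤

/-!
Every factor of the formula dominates `δ` entrywise because `δ` satisfies the triangle
inequality, so `A* ≥ δ`. Conversely, by (H1) a shortest walk from a vertex of `X` splits into
stretches on which `A` is exact, each followed by at most one edge back into `X`; every factor
`M = A[X,V] ⋆ A ⋆ A[V,X]` advances by at least one edge, `R = A[X,V] ⋆ A` covers the last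
stretch, and surplus powers of `M` cost nothing since `M` vanishes on the diagonal of `X`.
A start outside `X` is reduced to this case by (H1) once more, through `A ⋆ A[V,X]`.
-/

section Walk

variable {E : V → V → Prop} {k l : ℕ} {p q : ℕ → V}

theorem IsWalk.mono (hp : IsWalk E k p) (hl : l ≤ k) : IsWalk E l p :=
  fun i hi => hp i (hi.trans_le hl)

theorem IsWalk.shift_s6 (hp : IsWalk E (l + k) p) : IsWalk E k (fun i => p (l + i)) :=
  fun i hi => hp (l + i) (by omega)

theorem IsWalk.append (hp : IsWalk E k p) (hq : IsWalk E l q) (h : p k = q 0) :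
    ∃ r : ℕ → V, r 0 = p 0 ∧ r (k + l) = q l ∧ IsWalk E (k + l) r := by
  refine ⟨fun i => if i ≤ k then p i else q (i - k), by simp, ?_, fun i hi => ?_⟩
  · dsimp only
    split_ifs with hl
    · rw [show l = 0 by omega, add_zero, h]
    · rw [Nat.add_sub_cancel_left]
  · dsimp only
    split_ifs with hik hik' hik'
    · exact hp i (by omega)
    · rw [show i = k by omega, h, show k + 1 - k = 0 + 1 by omega]
      exact hq 0 (by omega)
    · omega
    · rw [show i + 1 - k = i - k + 1 by omega]
      exact hq (i - k) (by omega)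

theorem IsWalk.exists_cut (hp : IsWalk E k p) {i j : ℕ} (hij : i < j) (hjk : j ≤ k)
    (hpij : p i = p j) :
    ∃ r : ℕ → V, r 0 = p 0 ∧ r (i + (k - j)) = p k ∧ IsWalk E (i + (k - j)) r := by
  have htail : IsWalk E (k - j) (fun m => p (j + m)) :=
    (hp.mono (show j + (k - j) ≤ k by omega)).shift_s6
  obtain ⟨r, hr0, hrk, hr⟩ := (hp.mono (hij.le.trans hjk)).append htail hpij
  exact ⟨r, hr0, by rw [hrk, Nat.add_sub_cancel' hjk], hr⟩

end Walk

section Distance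

variable {E : V → V → Prop} {s t : V}

theorem gdist_le_of_walk {k : ℕ} {p : ℕ → V} (h0 : p 0 = s) (hk : p k = t)
    (hp : IsWalk E k p) : gdist E s t ≤ k :=
  iInf₂_le k ⟨p, h0, hk, hp⟩

theorem exists_walk_of_gdist_eq {k : ℕ} (h : gdist E s t = k) :
    ∃ p : ℕ → V, p 0 = s ∧ p k = t ∧ IsWalk E k p := by
  rw [gdist, iInf_subtype'] at h
  set W := {m // ∃ p : ℕ → V, p 0 = s ∧ p m = t ∧ IsWalk E m p}
  rcases isEmpty_or_nonempty W with hW | hW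
  · simp at h
  · obtain ⟨⟨m, hm⟩, hmk⟩ := ENat.exists_eq_iInf fun m : W => (m : ℕ∞)
    rw [h, Nat.cast_inj] at hmk
    exact hmk ▸ hm

theorem gdist_self (s : V) : gdist E s s = 0 :=
  nonpos_iff_eq_zero.mp (gdist_le_of_walk (p := fun _ => s) rfl rfl (by simp [IsWalk]))

theorem eq_of_gdist_eq_zero (h : gdist E s t = 0) : s = t := by
  obtain ⟨p, hp0, hpk, -⟩ := exists_walk_of_gdist_eq (k := 0) h
  exact hp0.symm.trans hpk

theorem adj_of_gdist_eq_one (h : gdist E s t = 1) : E s t := by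
  obtain ⟨p, hp0, hpk, hp⟩ := exists_walk_of_gdist_eq (k := 1) (by exact_mod_cast h)
  exact hp0 ▸ hpk ▸ hp 0 one_pos

theorem gdist_le_one_of_adj (h : E s t) : gdist E s t ≤ 1 := by
  exact_mod_cast gdist_le_of_walk (p := fun i => if i = 0 then s else t) rfl rfl
    (fun i hi => by simpa [show i = 0 by omega] using h)

theorem gdist_triangle (s u t : V) : gdist E s t ≤ gdist E s u + gdist E u t := by
  cases hsu : gdist E s u with
  | top => simp
  | coe k =>
    cases hut : gdist E u t with
    | top => simp
    | coe l =>
      obtain ⟨p, hp0, hpk, hp⟩ := exists_walk_of_gdist_eq hsu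
      obtain ⟨q, hq0, hql, hq⟩ := exists_walk_of_gdist_eq hut
      obtain ⟨r, hr0, hrl, hr⟩ := hp.append hq (hpk.trans hq0.symm)
      exact_mod_cast gdist_le_of_walk (hr0.trans hp0) (hrl.trans hql) hr

theorem exists_adj_gdist_eq_of_gdist_eq_add_one {k : ℕ} (h : gdist E s t = k + 1) :
    ∃ q, E s q ∧ gdist E q t = k := by
  obtain ⟨p, hp0, hpk, hp⟩ := exists_walk_of_gdist_eq (k := k + 1) (by exact_mod_cast h)
  have hE : E s (p 1) := hp0 ▸ hp 0 k.succ_pos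
  refine ⟨p 1, hE, le_antisymm ?_ ?_⟩
  · exact gdist_le_of_walk (p := fun i => p (1 + i)) rfl (by rwa [add_comm])
      (hp.mono (by omega)).shift_s6
  · have h1 := (h ▸ gdist_triangle s (p 1) t).trans (add_le_add (gdist_le_one_of_adj hE) le_rfl)
    rw [add_comm] at h1
    exact (ENat.add_le_add_iff_left ENat.one_ne_top).mp h1

/-- A shortest walk visits no vertex twice, so it is shorter than the number of vertices. -/
theorem gdist_le_card [Fintype V] (h : gdist E s t ≠ ⊤) : gdist E s t ≤ Fintype.card V := by
  lift gdist E s t to ℕ using h with k hk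
  obtain ⟨p, hp0, hpk, hp⟩ := exists_walk_of_gdist_eq hk.symm
  have hinj : ∀ i j : Fin (k + 1), i < j → p i ≠ p j := fun i j hij hpij => by
    obtain ⟨r, hr0, hrk, hr⟩ := hp.exists_cut hij (by omega) hpij
    have := hk ▸ gdist_le_of_walk (hr0.trans hp0) (hrk.trans hpk) hr
    norm_cast at this
    omega
  have := Fintype.card_le_of_injective (fun i : Fin (k + 1) => p i) fun a b hab => by
    by_contra hne
    rcases lt_or_gt_of_ne hne with hlt | hlt
    · exact hinj a b hlt hab
    · exact hinj b a hlt hab.symm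
  rw [Fintype.card_fin] at this
  exact_mod_cast Nat.le_of_succ_le this

end Distance

section MinPlus

variable [Fintype V]

theorem mp_le (P Q : V → V → ℕ∞) (i k j : V) : mp P Q i j ≤ P i k + Q k j :=
  iInf_le _ k

theorem mp_assoc (P Q R : V → V → ℕ∞) : mp (mp P Q) R = mp P (mp Q R) := by
  funext i j
  simp only [mp, ENat.iInf_add, ENat.add_iInf, add_assoc]
  exact iInf_comm

theorem mpPow_zero_mp (M N : V → V → ℕ∞) : mp (mpPow M 0) N = N := by
  funext i j
  refine le_antisymm ((mp_le _ _ i i j).trans (by simp [mpPow])) (le_iInf fun k => ?_)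
  by_cases h : i = k <;> simp [mpPow, h]

theorem mp_mpPow_zero (M N : V → V → ℕ∞) : mp N (mpPow M 0) = N := by
  funext i j
  refine le_antisymm ((mp_le _ _ i j j).trans (by simp [mpPow])) (le_iInf fun k => ?_)
  by_cases h : k = j <;> simp [mpPow, h]

theorem mpPow_succ' (M : V → V → ℕ∞) (k : ℕ) : mpPow M (k + 1) = mp M (mpPow M k) := by
  induction k with
  | zero => exact (mpPow_zero_mp M M).trans (mp_mpPow_zero M M).symm
  | succ k ih =>
    show mp (mpPow M (k + 1)) M = mp M (mp (mpPow M k) M)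
    rw [ih, mp_assoc]

theorem mp_mpPow_succ_le (M R : V → V → ℕ∞) (k : ℕ) (x z t : V) :
    mp (mpPow M (k + 1)) R x t ≤ M x z + mp (mpPow M k) R z t := by
  rw [mpPow_succ', mp_assoc]
  exact mp_le _ _ x z t

theorem mpPow_apply_self {M : V → V → ℕ∞} {x : V} (h : M x x = 0) (k : ℕ) :
    mpPow M k x x = 0 := by
  induction k with
  | zero => simp [mpPow]
  | succ k ih => exact nonpos_iff_eq_zero.mp ((mp_le _ _ x x x).trans (by rw [ih, h, add_zero]))

theorem mp_mpPow_le_of_apply_self {M : V → V → ℕ∞} {x : V} (h : M x x = 0)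
    (R : V → V → ℕ∞) (k : ℕ) (t : V) : mp (mpPow M k) R x t ≤ R x t := by
  simpa [mpPow_apply_self h] using mp_le (mpPow M k) R x x t

theorem mp_maskRow_le {X : Set V} {x : V} (hx : x ∈ X) (P Q : V → V → ℕ∞) (q t : V) :
    mp (maskRow X P) Q x t ≤ P x q + Q q t := by
  simpa [maskRow, hx] using mp_le (maskRow X P) Q x q t

theorem mp_maskCol_le {X : Set V} {r : V} (hr : r ∈ X) (P Q : V → V → ℕ∞) (x q : V) :
    mp P (maskCol X Q) x r ≤ P x q + Q q r := by
  simpa [maskCol, hr] using mp_le P (maskCol X Q) x q r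

end MinPlus

section Bounds

theorem le_maskRow (X : Set V) (M : V → V → ℕ∞) : M ≤ maskRow X M := fun i j => by
  unfold maskRow; split_ifs <;> simp

theorem le_maskCol (X : Set V) (M : V → V → ℕ∞) : M ≤ maskCol X M := fun i j => by
  unfold maskCol; split_ifs <;> simp

variable [Fintype V] {E : V → V → Prop}

theorem gdist_le_mp {P Q : V → V → ℕ∞} (hP : gdist E ≤ P) (hQ : gdist E ≤ Q) :
    gdist E ≤ mp P Q := fun i j =>
  le_iInf fun k => (gdist_triangle i k j).trans (add_le_add (hP i k) (hQ k j))

theorem gdist_le_mpPow {M : V → V → ℕ∞} (hM : gdist E ≤ M) (k : ℕ) :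
    gdist E ≤ mpPow M k := by
  induction k with
  | zero =>
    intro i j
    by_cases h : i = j
    · simp [mpPow, h, gdist_self]
    · simp [mpPow, h]
  | succ k ih => exact gdist_le_mp ih hM

end Bounds

section Reconstruction

variable {E : V → V → Prop} {X : Set V} {A : V → V → ℕ∞}

theorem eq_gdist_of_gdist_le_one (hdiag : ∀ u, A u u = 0)
    (hedge : ∀ u v, u ≠ v → E u v → A u v = 1) {u v : V} (h : gdist E u v ≤ 1) :
    A u v = gdist E u v := by
  rcases Order.le_one_iff.mp h with h0 | h1
  · obtain rfl := eq_of_gdist_eq_zero h0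
    rw [hdiag, h0]
  · have huv : u ≠ v := by
      rintro rfl
      simp [gdist_self] at h1
    rw [hedge u v huv (adj_of_gdist_eq_one h1), h1]

variable [Fintype V]

theorem mp_mpPow_le_gdist (hexact : ∀ u v, gdist E u v ≤ 1 → A u v = gdist E u v)
    (H1 : ∀ s t : V, s ∉ X → gdist E s t ≠ ⊤ →
      A s t = gdist E s t ∨
      ∃ q r : V, r ∈ X ∧ A s q = gdist E s q ∧ gdist E q r ≤ 1 ∧
        gdist E s t = gdist E s q + gdist E q r + gdist E r t)
    (k : ℕ) (x t : V) (hx : x ∈ X) (hxt : gdist E x t ≤ k) :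
    mp (mpPow (mp (mp (maskRow X A) A) (maskCol X A)) k) (mp (maskRow X A) A) x t ≤
      gdist E x t := by
  set R := mp (maskRow X A) A
  set M := mp R (maskCol X A)
  have hAself (u : V) : A u u = 0 := (hexact u u (by simp [gdist_self])).trans (gdist_self u)
  have hM {a r : V} (b c : V) (ha : a ∈ X) (hr : r ∈ X) : M a r ≤ A a b + A b c + A c r :=
    (mp_maskCol_le hr R A a c).trans (add_le_add (mp_maskRow_le ha A A b c) le_rfl)
  have hMself {a : V} (ha : a ∈ X) : M a a = 0 :=
    nonpos_iff_eq_zero.mp ((hM a a ha ha).trans (by simp [hAself]))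
  induction k generalizing x t with
  | zero =>
    obtain rfl := eq_of_gdist_eq_zero (nonpos_iff_eq_zero.mp (by exact_mod_cast hxt))
    calc _ ≤ R x x := mp_mpPow_le_of_apply_self (hMself hx) R 0 x
      _ ≤ A x x + A x x := mp_maskRow_le hx A A x x
      _ = gdist E x x := by simp [hAself, gdist_self]
  | succ k ih =>
    push_cast at hxt
    rcases hxt.lt_or_eq with hlt | heq
    · calc _ ≤ M x x + mp (mpPow M k) R x t := mp_mpPow_succ_le M R k x x t
        _ ≤ gdist E x t := by
          rw [hMself hx, zero_add]
          exact ih x t hx ((ENat.lt_add_one_iff (ENat.natCast_ne_top k)).mp hlt)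
    obtain ⟨q, hxq, hqt⟩ := exists_adj_gdist_eq_of_gdist_eq_add_one heq
    have hAxq : A x q ≤ 1 :=
      (hexact x q (gdist_le_one_of_adj hxq)).trans_le (gdist_le_one_of_adj hxq)
    suffices mp (mpPow M (k + 1)) R x t ≤ 1 + gdist E q t by
      rwa [heq, ← hqt, add_comm (gdist E q t)]
    by_cases hq : q ∈ X
    · calc _ ≤ M x q + mp (mpPow M k) R q t := mp_mpPow_succ_le M R k x q t
        _ ≤ 1 + gdist E q t :=
          add_le_add ((hM x q hx hq).trans (by simp [hAself, hAxq])) (ih q t hq hqt.le)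
    rcases H1 q t hq (by simp [hqt]) with hAqt | ⟨q', r, hr, hAqq', hq'r, hsum⟩
    · calc _ ≤ R x t := mp_mpPow_le_of_apply_self (hMself hx) R _ t
        _ ≤ A x q + A q t := mp_maskRow_le hx A A q t
        _ ≤ 1 + gdist E q t := add_le_add hAxq hAqt.le
    · calc _ ≤ M x r + mp (mpPow M k) R r t := mp_mpPow_succ_le M R k x r t
        _ ≤ A x q + A q q' + A q' r + gdist E r t :=
          add_le_add (hM q q' hx hr) (ih r t hr (hqt ▸ hsum ▸ le_add_self))
        _ = A x q + gdist E q t := by rw [hsum, hAqq', hexact q' r hq'r]; ring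
        _ ≤ 1 + gdist E q t := add_le_add hAxq le_rfl

end Reconstruction

theorem minplus_formula_correct_general {V : Type*} [Fintype V]
    (E : V → V → Prop) (X : Set V) (n : ℕ)
    (hn : Fintype.card V = n)
    (A : V → V → ℕ∞)
    (hdiag : ∀ u : V, A u u = 0)
    (hedge : ∀ u v : V, u ≠ v → E u v → A u v = 1)
    (hub : ∀ u v : V, gdist E u v ≤ A u v)
    (H1 : ∀ s t : V, s ∉ X → gdist E s t ≠ ⊤ →
      A s t = gdist E s t ∨
      ∃ q r : V, r ∈ X ∧ A s q = gdist E s q ∧ gdist E q r ≤ 1 ∧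
        1 ≤ gdist E s q + gdist E q r ∧
        gdist E s t = gdist E s q + gdist E q r + gdist E r t) :
    ∀ s t : V,
      min (A s t)
        ((mp (mp A (maskCol X A))
          (mp (mpPow (mp (mp (maskRow X A) A) (maskCol X A)) n)
            (mp (maskRow X A) A))) s t)
      = gdist E s t := by
  intro s t
  have hkey := mp_mpPow_le_gdist (fun u v => eq_gdist_of_gdist_le_one hdiag hedge)
    (fun s t hs hst => (H1 s t hs hst).imp_right
      fun ⟨q, r, hr, hsq, hqr, _, hsum⟩ => ⟨q, r, hr, hsq, hqr, hsum⟩) n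
  have hA : gdist E ≤ A := hub
  have hL : gdist E ≤ mp A (maskCol X A) := gdist_le_mp hA (hA.trans (le_maskCol X A))
  have hR : gdist E ≤ mp (maskRow X A) A := gdist_le_mp (hA.trans (le_maskRow X A)) hA
  have hM := gdist_le_mp hR (hA.trans (le_maskCol X A))
  have hlower := gdist_le_mp hL (gdist_le_mp (gdist_le_mpPow hM n) hR)
  refine le_antisymm ?_ (le_min (hub s t) (hlower s t))
  by_cases hst : gdist E s t = ⊤
  · exact hst ▸ le_top
  have hsn : gdist E s t ≤ n := hn ▸ gdist_le_card hst
  by_cases hs : s ∈ X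
  · calc _ ≤ _ := min_le_right _ _
      _ ≤ mp A (maskCol X A) s s + _ := mp_le _ _ s s t
      _ ≤ 0 + gdist E s t :=
        add_le_add ((mp_maskCol_le hs A A s s).trans (by simp [hdiag])) (hkey s t hs hsn)
      _ = gdist E s t := zero_add _
  rcases H1 s t hs hst with hAst | ⟨q, r, hr, hAsq, hqr, -, hsum⟩
  · exact (min_le_left _ _).trans hAst.le
  · calc _ ≤ _ := min_le_right _ _
      _ ≤ mp A (maskCol X A) s r + _ := mp_le _ _ s r t
      _ ≤ A s q + A q r + gdist E r t :=
        add_le_add (mp_maskCol_le hr A A s q) (hkey r t hr ((hsum ▸ le_add_self).trans hsn))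
      _ = gdist E s t := by rw [hAsq, eq_gdist_of_gdist_le_one hdiag hedge hqr, hsum]

/-- **Lemma 6.4, abstract form.** Under the hypotheses (H0)–(H2) on the matrix `A` and the
set `X`, the matrix `A* = min(A, (A ⋆ A[V,X]) ⋆ (A[X,V] ⋆ A ⋆ A[V,X])^n ⋆ (A[X,V] ⋆ A))`
(powers w.r.t. the min-plus product, minimum entrywise) satisfies `A*_{s,t} = δ_G(s,t)`. -/
theorem minplus_formula_correct {V : Type*} [Fintype V]
    (E : V → V → Prop) (X : Set V) (n : ℕ)
    (hn : Fintype.card V = n) (hn1 : 1 ≤ n)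
    (A : V → V → ℕ∞)
    (hdiag : ∀ u : V, A u u = 0)
    (hedge : ∀ u v : V, u ≠ v → E u v → A u v = 1)
    (hub : ∀ u v : V, gdist E u v ≤ A u v)
    (H1 : ∀ s t : V, s ∉ X → gdist E s t ≠ ⊤ →
      A s t = gdist E s t ∨
      ∃ q r : V, r ∈ X ∧ A s q = gdist E s q ∧ gdist E q r ≤ 1 ∧
        1 ≤ gdist E s q + gdist E q r ∧
        gdist E s t = gdist E s q + gdist E q r + gdist E r t)
    (H2 : ∀ s t : V, t ∉ X → gdist E s t ≠ ⊤ →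
      A s t = gdist E s t ∨
      ∃ q r : V, r ∈ X ∧ A q t = gdist E q t ∧ gdist E r q ≤ 1 ∧
        1 ≤ gdist E r q + gdist E q t ∧
        gdist E s t = gdist E s r + gdist E r q + gdist E q t) :
    ∀ s t : V,
      min (A s t)
        ((mp (mp A (maskCol X A))
          (mp (mpPow (mp (mp (maskRow X A) A) (maskCol X A)) n)
            (mp (maskRow X A) A))) s t)
      = gdist E s t :=
  minplus_formula_correct_general E X n hn A hdiag hedge hub H1

end Paper
end
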